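/- For n = 3 and the index set Λ = {(1,2),(2,3),(1,4)}, the Lie subalgebra generated by {Ω̃_{12}, Ω̃_{23}, E_{14}} (the smallest real subspace containing these three matrices and closed under the bracket) equals se(3). -/

import Mathlib

open Matrix

attribute [local instance 100] LieRing.ofAssociativeRing

/-!
Common setup: real (n+1)×(n+1) matrices (rows/columns indexed by `Fin (n+1)`,
where index `i : Fin n` cast via `Fin.castSucc` plays the role of `i ∈ {1,…,n}`
and `Fin.last n` plays the role of the index `n+1`), the Lie bracket
`⁅A,B⁆ = A*B - B*A`, the matrices `Ω̃_{ij}` and `E_{k,n+1}`, the Lie algebra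
`se(n)`, index sets `Λ`, pattern subspaces `B_Λ`, graphs with solid/broken
edges, the one-step transitive closure, and derived distributions.
-/

/-- The ambient space of real (n+1)×(n+1) matrices. -/
abbrev Mat (n : ℕ) := Matrix (Fin (n + 1)) (Fin (n + 1)) ℝ

/-- `Ω̃_{ij}`: 1 in entry (i,j), −1 in entry (j,i), 0 elsewhere (indices among 1,…,n). -/
def Omega {n : ℕ} (i j : Fin n) : Mat n :=
  Matrix.single i.castSucc j.castSucc 1 - Matrix.single j.castSucc i.castSucc 1

/-- `E_{k,n+1}`: 1 in entry (k, n+1), 0 elsewhere. -/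
def Ecol {n : ℕ} (k : Fin n) : Mat n :=
  Matrix.single k.castSucc (Fin.last n) 1

/-- The set se(n): matrices whose (n+1)-th row is zero and with
`M(i,j) = −M(j,i)` for all 1 ≤ i,j ≤ n. -/
def seSet (n : ℕ) : Set (Mat n) :=
  {M | (∀ j, M (Fin.last n) j = 0) ∧
    ∀ i j : Fin n, M i.castSucc j.castSucc = - M j.castSucc i.castSucc}

/-- se(n) as a real subspace of the (n+1)×(n+1) matrices. -/
def seL (n : ℕ) : Submodule ℝ (Mat n) where
  carrier := seSet n
  add_mem' := by
    rintro a b ⟨ha1, ha2⟩ ⟨hb1, hb2⟩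
    refine ⟨fun j => ?_, fun i j => ?_⟩
    · simp [Matrix.add_apply, ha1 j, hb1 j]
    · simp only [Matrix.add_apply, ha2 i j, hb2 i j]; ring
  zero_mem' := by
    refine ⟨fun j => ?_, fun i j => ?_⟩ <;> simp
  smul_mem' := by
    rintro c a ⟨ha1, ha2⟩
    refine ⟨fun j => ?_, fun i j => ?_⟩
    · simp [Matrix.smul_apply, ha1 j]
    · simp only [Matrix.smul_apply, ha2 i j, smul_neg]

/-- Kronecker delta (real-valued). -/
def kron {n : ℕ} (p q : Fin n) : ℝ := if p = q then 1 else 0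

/-- An index set Λ: a set of pairs (p,q) with p < q, i.e. a subset of
`{(i,j) : 1 ≤ i < j ≤ n} ∪ {(k, n+1) : 1 ≤ k ≤ n}`. -/
def IndexSet {n : ℕ} (Λ : Set (Fin (n + 1) × Fin (n + 1))) : Prop :=
  ∀ e ∈ Λ, e.1 < e.2

/-- The generating set `{Ω̃_{ij} : (i,j) ∈ Λ, j ≤ n} ∪ {E_{k,n+1} : (k,n+1) ∈ Λ}`. -/
def genSet {n : ℕ} (Λ : Set (Fin (n + 1) × Fin (n + 1))) : Set (Mat n) :=
  {M | (∃ i j : Fin n, (i.castSucc, j.castSucc) ∈ Λ ∧ M = Omega i j) ∨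
    (∃ k : Fin n, (k.castSucc, Fin.last n) ∈ Λ ∧ M = Ecol k)}

/-- The pattern subspace `B_Λ`. -/
def BLam {n : ℕ} (Λ : Set (Fin (n + 1) × Fin (n + 1))) : Submodule ℝ (Mat n) :=
  Submodule.span ℝ (genSet Λ)

/-- `B_Λ` generates `se(n)` as a Lie algebra: the smallest real subspace containing
`B_Λ` and closed under the bracket (i.e. the Lie subalgebra generated by `B_Λ`)
equals `se(n)`. -/
def GeneratesSE (n : ℕ) (Λ : Set (Fin (n + 1) × Fin (n + 1))) : Prop :=
  (LieSubalgebra.lieSpan ℝ (Mat n) (BLam Λ : Set (Mat n)) : Set (Mat n)) = seSet n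

/-- A graph on vertices {1,…,n+1} recorded by its solid and broken adjacency relations. -/
structure SBGraph (n : ℕ) where
  solid : Fin (n + 1) → Fin (n + 1) → Prop
  broken : Fin (n + 1) → Fin (n + 1) → Prop

/-- A well-formed solid/broken graph: simple and symmetric; solid edges have both
endpoints among 1,…,n, broken edges have one endpoint equal to n+1. -/
def SBGraph.Good {n : ℕ} (G : SBGraph n) : Prop :=
  (∀ p q, G.solid p q → G.solid q p) ∧ (∀ p q, G.solid p q → p ≠ q) ∧
  (∀ p q, G.solid p q → p ≠ Fin.last n ∧ q ≠ Fin.last n) ∧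
  (∀ p q, G.broken p q → G.broken q p) ∧ (∀ p q, G.broken p q → p ≠ q) ∧
  (∀ p q, G.broken p q → p = Fin.last n ∨ q = Fin.last n)

/-- The one-step closure: for distinct vertices i,j,k, add a solid edge {i,k} whenever
{i,j} and {j,k} are both solid, and a broken edge {i,k} whenever one of {i,j},{j,k} is
solid and the other is broken (nothing is added when both are broken). -/
def SBGraph.step {n : ℕ} (G : SBGraph n) : SBGraph n where
  solid := fun i k => G.solid i k ∨
    (∃ j, i ≠ j ∧ j ≠ k ∧ i ≠ k ∧ G.solid i j ∧ G.solid j k)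
  broken := fun i k => G.broken i k ∨
    (∃ j, i ≠ j ∧ j ≠ k ∧ i ≠ k ∧
      ((G.solid i j ∧ G.broken j k) ∨ (G.broken i j ∧ G.solid j k)))

/-- The l-th transitive closure `G^{(l)}`. -/
def SBGraph.closure {n : ℕ} (G : SBGraph n) (l : ℕ) : SBGraph n :=
  (fun H => SBGraph.step H)^[l] G

/-- `G` is the complete graph on the n+1 vertices: every pair of distinct vertices
is joined by a (solid or broken) edge. -/
def SBGraph.IsComplete {n : ℕ} (G : SBGraph n) : Prop :=
  ∀ p q : Fin (n + 1), p ≠ q → G.solid p q ∨ G.broken p q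

/-- The graph `G(B_Λ)` associated with a pattern: solid edges {i,j} for (i,j) ∈ Λ with
j ≤ n, broken edges {k,n+1} for (k,n+1) ∈ Λ. -/
def patternGraph {n : ℕ} (Λ : Set (Fin (n + 1) × Fin (n + 1))) : SBGraph n where
  solid := fun p q => ∃ i j : Fin n, (i.castSucc, j.castSucc) ∈ Λ ∧
    ((p = i.castSucc ∧ q = j.castSucc) ∨ (p = j.castSucc ∧ q = i.castSucc))
  broken := fun p q => ∃ k : Fin n, (k.castSucc, Fin.last n) ∈ Λ ∧
    ((p = k.castSucc ∧ q = Fin.last n) ∨ (p = Fin.last n ∧ q = k.castSucc))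

/-- One step of the derived-distribution construction:
`D ↦ D + span{[A₁,A₂] : A₁,A₂ ∈ D}`. -/
def derivedStep {n : ℕ} (D : Submodule ℝ (Mat n)) : Submodule ℝ (Mat n) :=
  D ⊔ Submodule.span ℝ {M | ∃ A B, A ∈ D ∧ B ∈ D ∧ M = A * B - B * A}

/-- The i-th derived distribution `D^{(i)}`. -/
def derivedIter {n : ℕ} (D : Submodule ℝ (Mat n)) (i : ℕ) : Submodule ℝ (Mat n) :=
  (fun S => derivedStep S)^[i] D

/-!
se(n) is a Lie subalgebra: a bracket of matrices with zero last row again has zero last row, and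
its upper-left block is a commutator of skew-symmetric blocks. As a vector space it is spanned by
the `Ω̃_{ij}` and the `E_{k,n+1}`. For n = 3 the three missing basis elements arise as
`[Ω̃₁₂, Ω̃₂₃] = Ω̃₁₃`, `[E₁₄, Ω̃₁₂] = E₂₄` and `[E₂₄, Ω̃₂₃] = E₃₄`.
-/

section

variable {n : ℕ}

lemma Omega_swap (i j : Fin n) : Omega j i = -Omega i j := by
  simp [Omega]

lemma Omega_self (i : Fin n) : Omega i i = 0 := by
  simp [Omega]

lemma Omega_mem_seSet (i j : Fin n) : Omega i j ∈ seSet n := by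
  refine ⟨fun k => ?_, fun p q => ?_⟩
  · simp [Omega]
  · simp only [Omega, Matrix.sub_apply, Matrix.single_apply, Fin.castSucc_inj, neg_sub, and_comm]

lemma Ecol_mem_seSet (k : Fin n) : Ecol k ∈ seSet n := by
  refine ⟨fun j => ?_, fun p q => ?_⟩
  · simp [Ecol]
  · simp [Ecol, (Fin.castSucc_ne_last _).symm]

lemma lie_Omega_Omega {i j k : Fin n} (hij : i ≠ j) (hjk : j ≠ k) (hik : i ≠ k) :
    ⁅Omega i j, Omega j k⁆ = Omega i k := by
  simp [Ring.lie_def, Omega, sub_mul, mul_sub, hij, hjk, hik, hij.symm, hjk.symm, hik.symm]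

lemma lie_Ecol_Omega {i j : Fin n} (hij : i ≠ j) : ⁅Ecol i, Omega i j⁆ = Ecol j := by
  simp [Ring.lie_def, Omega, Ecol, sub_mul, mul_sub, hij.symm, (Fin.castSucc_ne_last _).symm]

/-- The vanishing last row kills the extra summand, and the two skew-symmetries cancel. -/
lemma mul_apply_castSucc_eq_mul_apply_swap {a b : Mat n} (ha : a ∈ seSet n) (hb : b ∈ seSet n)
    (i j : Fin n) : (a * b) i.castSucc j.castSucc = (b * a) j.castSucc i.castSucc := by
  simp only [Matrix.mul_apply, Fin.sum_univ_castSucc, ha.1, hb.1, mul_zero, add_zero]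
  refine Finset.sum_congr rfl fun k _ => ?_
  rw [ha.2 i k, hb.2 k j]
  ring

lemma lie_mem_seSet {a b : Mat n} (ha : a ∈ seSet n) (hb : b ∈ seSet n) : ⁅a, b⁆ ∈ seSet n := by
  refine ⟨fun j => ?_, fun i j => ?_⟩
  · simp [Ring.lie_def, Matrix.mul_apply, ha.1, hb.1]
  · rw [Ring.lie_def, Matrix.sub_apply, Matrix.sub_apply,
      mul_apply_castSucc_eq_mul_apply_swap ha hb i j,
      mul_apply_castSucc_eq_mul_apply_swap hb ha i j]
    ring

def seLieSubalgebra (n : ℕ) : LieSubalgebra ℝ (Mat n) :=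
  { seL n with lie_mem' := lie_mem_seSet }

lemma eq_sum_Omega_add_sum_Ecol {M : Mat n} (hM : M ∈ seSet n) :
    M = ∑ i, ∑ j, (M i.castSucc j.castSucc / 2) • Omega i j
      + ∑ k, M k.castSucc (Fin.last n) • Ecol k := by
  obtain ⟨hlast, hskew⟩ := hM
  ext p q
  induction p using Fin.lastCases with
  | last => simp [hlast, Omega, Ecol, Matrix.sum_apply]
  | cast p =>
    induction q using Fin.lastCases with
    | last => simp [Omega, Ecol, Matrix.sum_apply, Matrix.single_apply]
    | cast q =>
      simp only [Omega, Ecol, smul_single, smul_eq_mul, mul_one, Matrix.add_apply,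
        Matrix.sum_apply, Matrix.smul_apply, Matrix.sub_apply, single_apply, Fin.castSucc_inj,
        ite_and, mul_sub, mul_ite, mul_zero, Finset.sum_sub_distrib, Finset.sum_ite_irrel,
        Finset.sum_ite_eq', Finset.mem_univ, ↓reduceIte, Finset.sum_const_zero, hskew q p,
        (Fin.castSucc_ne_last _).symm, and_false, add_zero]
      ring

lemma seSet_subset_of_Omega_mem_of_Ecol_mem {S : Submodule ℝ (Mat n)}
    (hΩ : ∀ i j, i < j → Omega i j ∈ S) (hE : ∀ k, Ecol k ∈ S) : seSet n ⊆ S := by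
  have hΩ' (i j : Fin n) : Omega i j ∈ S := by
    rcases lt_trichotomy i j with h | rfl | h
    · exact hΩ i j h
    · simp [Omega_self]
    · simpa [Omega_swap j i] using S.neg_mem (hΩ j i h)
  intro M hM
  rw [eq_sum_Omega_add_sum_Ecol hM]
  exact S.add_mem (S.sum_mem fun i _ => S.sum_mem fun j _ => S.smul_mem _ (hΩ' i j))
    (S.sum_mem fun k _ => S.smul_mem _ (hE k))

end

/-- Indices are shifted: 1, 2, 3, 4 ↔ 0, 1, 2, 3. -/
theorem stmt14 :
    (LieSubalgebra.lieSpan ℝ (Mat 3)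
        {Omega (0 : Fin 3) (1 : Fin 3), Omega (1 : Fin 3) (2 : Fin 3),
          Ecol (0 : Fin 3)} : Set (Mat 3)) = seSet 3 := by
  set S := LieSubalgebra.lieSpan ℝ (Mat 3)
    {Omega (0 : Fin 3) (1 : Fin 3), Omega (1 : Fin 3) (2 : Fin 3), Ecol (0 : Fin 3)}
  have h01 : Omega (0 : Fin 3) 1 ∈ S := LieSubalgebra.subset_lieSpan (by simp)
  have h12 : Omega (1 : Fin 3) 2 ∈ S := LieSubalgebra.subset_lieSpan (by simp)
  have hE0 : Ecol (0 : Fin 3) ∈ S := LieSubalgebra.subset_lieSpan (by simp)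
  have h02 : Omega (0 : Fin 3) 2 ∈ S := by
    rw [← lie_Omega_Omega (j := 1) (by decide) (by decide) (by decide)]
    exact S.lie_mem h01 h12
  have hE1 : Ecol (1 : Fin 3) ∈ S := by
    rw [← lie_Ecol_Omega (i := 0) (by decide)]
    exact S.lie_mem hE0 h01
  have hE2 : Ecol (2 : Fin 3) ∈ S := by
    rw [← lie_Ecol_Omega (i := 1) (by decide)]
    exact S.lie_mem hE1 h12
  refine subset_antisymm ?_ (seSet_subset_of_Omega_mem_of_Ecol_mem (S := S.toSubmodule) ?_ ?_)
  · refine (LieSubalgebra.lieSpan_le (K := seLieSubalgebra 3)).mpr ?_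
    rintro _ (rfl | rfl | rfl)
    exacts [Omega_mem_seSet 0 1, Omega_mem_seSet 1 2, Ecol_mem_seSet 0]
  · intro i j hij
    fin_cases i <;> fin_cases j <;> first | exact absurd hij (by decide) | assumption
  · intro k
    fin_cases k <;> assumption
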